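/- arXiv:quant-ph/9801058 — 4 statements merged into one kernel-verified Lean document; each statement's English description precedes it below -/
import Mathlib

section
/- Consequently, for ε > 0 fixed, the quantity (1/√(πℏ)) · ∑_{k∈ℤ} ∫_0^{1/2} e^{−(x−x₀+k)²/ℏ} dx tends to 0 as ℏ → 0⁺, whenever x₀ ∈ [l/2+ε, (l+1)/2−ε) for some odd integer l. -/
open MeasureTheory Real Filter

/-- If `x₀ ∈ [l/2+ε, (l+1)/2−ε)` for some odd integer `l` and `ε > 0`, then
`(1/√(πℏ)) ∑_{k∈ℤ} ∫_0^{1/2} e^{−(x−x₀+k)²/ℏ} dx → 0` as `ℏ → 0⁺`. -/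
theorem gaussian_mass_off_support (x₀ ε : ℝ) (l : ℤ) (hl : Odd l) (hε : 0 < ε)
    (hx₀ : x₀ ∈ Set.Ico ((l : ℝ) / 2 + ε) (((l : ℝ) + 1) / 2 - ε)) :
    Tendsto
      (fun ℏ : ℝ =>
        (1 / Real.sqrt (Real.pi * ℏ)) *
          ∑' k : ℤ, ∫ x in (0 : ℝ)..(1 / 2), Real.exp (-(x - x₀ + k) ^ 2 / ℏ))
      (nhdsWithin 0 (Set.Ioi 0)) (nhds 0) := by
  obtain ⟨m, hm⟩ := hl
  obtain ⟨hx1, hx2⟩ := hx₀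
  have hml : (l : ℝ) = 2 * m + 1 := by exact_mod_cast hm
  set S : ℤ → Set ℝ := fun k => Set.Ioc ((k : ℝ) - x₀) ((k : ℝ) - x₀ + 1 / 2) with hS
  have hmeas : ∀ k, MeasurableSet (S k) := fun k => measurableSet_Ioc
  have hdisj : Pairwise (Function.onFun Disjoint S) := by
    have key : ∀ i j : ℤ, i < j → Disjoint (S i) (S j) := by
      intro i j hij
      rw [hS, Set.Ioc_disjoint_Ioc]
      have : (i : ℝ) + 1 ≤ j := by exact_mod_cast hij
      exact min_le_of_left_le (le_max_of_le_right (by linarith))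
    exact fun i j hij => (Ne.lt_or_gt hij).elim (key i j) fun h => (key j i h).symm
  have hsub : ∀ k, S k ⊆ {y : ℝ | ε ≤ |y|} := by
    intro k y hy
    obtain ⟨hy1, hy2⟩ := hy
    have hdich : ε ≤ (k : ℝ) - x₀ ∨ (k : ℝ) - x₀ + 1 / 2 ≤ -ε := by
      by_contra h
      push_neg at h
      obtain ⟨h1, h2⟩ := h
      have hk1 : (m : ℝ) < k := by linarith
      have hk2 : (k : ℝ) < m + 1 := by linarith
      have : m < k := by exact_mod_cast hk1
      have : (m : ℝ) + 1 ≤ k := by exact_mod_cast this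
      linarith
    rcases hdich with h | h
    · have : ε ≤ y := by linarith
      simpa [abs_of_pos (lt_of_lt_of_le hε this)] using this
    · have hyneg : y ≤ -ε := by linarith
      have : ε ≤ -y := by linarith
      simpa [abs_of_neg (by linarith : y < 0)] using this
  -- nonnegativity of the function
  have hnonneg : ∀ ℏ : ℝ, 0 ≤
      (1 / Real.sqrt (Real.pi * ℏ)) *
        ∑' k : ℤ, ∫ x in (0 : ℝ)..(1 / 2), Real.exp (-(x - x₀ + k) ^ 2 / ℏ) := by
    intro ℏ
    refine mul_nonneg (by positivity) (tsum_nonneg fun k => ?_)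
    exact intervalIntegral.integral_nonneg (by norm_num) fun x _ => (Real.exp_pos _).le
  -- key bound
  have key : ∀ ℏ : ℝ, ℏ ∈ Set.Ioi (0:ℝ) →
      (1 / Real.sqrt (Real.pi * ℏ)) *
        ∑' k : ℤ, ∫ x in (0 : ℝ)..(1 / 2), Real.exp (-(x - x₀ + k) ^ 2 / ℏ)
      ≤ Real.sqrt 2 * Real.exp (-ε ^ 2 / (2 * ℏ)) := by
    intro ℏ hℏ
    have hℏ : (0:ℝ) < ℏ := hℏ
    have hint2 : Integrable (fun y : ℝ => Real.exp (-y ^ 2 / ℏ)) := by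
      have := integrable_exp_neg_mul_sq (b := 1 / ℏ) (by positivity)
      refine this.congr (Eventually.of_forall fun y => ?_)
      ring_nf
    -- step A: each term is a set integral
    have hterm : ∀ k : ℤ, (∫ x in (0 : ℝ)..(1 / 2), Real.exp (-(x - x₀ + k) ^ 2 / ℏ))
        = ∫ y in S k, Real.exp (-y ^ 2 / ℏ) := by
      intro k
      have h1 : (∫ x in (0 : ℝ)..(1 / 2), Real.exp (-(x - x₀ + k) ^ 2 / ℏ))
          = ∫ x in (0 : ℝ)..(1 / 2), (fun y => Real.exp (-y ^ 2 / ℏ)) (x + ((k : ℝ) - x₀)) := by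
        apply intervalIntegral.integral_congr
        intro x _
        simp only
        ring_nf
      rw [h1, intervalIntegral.integral_comp_add_right (fun y => Real.exp (-y ^ 2 / ℏ)) ((k:ℝ) - x₀)]
      rw [intervalIntegral.integral_of_le (by linarith)]
      rw [hS]
      norm_num
      ring_nf
    -- step B: sum ≤ integral over {ε ≤ |y|}
    have hB : (∑' k : ℤ, ∫ x in (0 : ℝ)..(1 / 2), Real.exp (-(x - x₀ + k) ^ 2 / ℏ))
        ≤ ∫ y in {y : ℝ | ε ≤ |y|}, Real.exp (-y ^ 2 / ℏ) := by
      have hUnion : (∑' k : ℤ, ∫ y in S k, Real.exp (-y ^ 2 / ℏ))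
          = ∫ y in ⋃ k, S k, Real.exp (-y ^ 2 / ℏ) :=
        (integral_iUnion hmeas hdisj (hint2.integrableOn)).symm
      calc (∑' k : ℤ, ∫ x in (0 : ℝ)..(1 / 2), Real.exp (-(x - x₀ + k) ^ 2 / ℏ))
          = ∑' k : ℤ, ∫ y in S k, Real.exp (-y ^ 2 / ℏ) := by
            exact tsum_congr hterm
        _ = ∫ y in ⋃ k, S k, Real.exp (-y ^ 2 / ℏ) := hUnion
        _ ≤ ∫ y in {y : ℝ | ε ≤ |y|}, Real.exp (-y ^ 2 / ℏ) := by
            apply setIntegral_mono_set hint2.integrableOn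
            · exact Eventually.of_forall fun y => (Real.exp_pos _).le
            · exact Eventually.of_forall (Set.iUnion_subset hsub)
    -- step C
    have hC : (∫ y in {y : ℝ | ε ≤ |y|}, Real.exp (-y ^ 2 / ℏ))
        ≤ Real.exp (-ε ^ 2 / (2 * ℏ)) * Real.sqrt (Real.pi * (2 * ℏ)) := by
      have hint3 : Integrable (fun y : ℝ => Real.exp (-ε ^ 2 / (2 * ℏ)) * Real.exp (-(1/(2*ℏ)) * y ^ 2)) :=
        (integrable_exp_neg_mul_sq (by positivity)).const_mul _
      have hmono : (∫ y in {y : ℝ | ε ≤ |y|}, Real.exp (-y ^ 2 / ℏ))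
          ≤ ∫ y in {y : ℝ | ε ≤ |y|},
              Real.exp (-ε ^ 2 / (2 * ℏ)) * Real.exp (-(1/(2*ℏ)) * y ^ 2) := by
        apply setIntegral_mono_on hint2.integrableOn hint3.integrableOn
          (measurableSet_le measurable_const measurable_abs)
        intro y hy
        rw [← Real.exp_add]
        apply Real.exp_le_exp.mpr
        have h1 : ε ^ 2 ≤ y ^ 2 := by
          have := sq_abs y ▸ pow_le_pow_left₀ hε.le hy 2
          simpa [sq_abs] using this
        have hr : (-ε ^ 2 / (2 * ℏ) + -(1 / (2 * ℏ)) * y ^ 2) = (-ε ^ 2 / 2 + -(1 / 2) * y ^ 2) * ℏ⁻¹ := by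
          field_simp
        rw [hr, div_eq_mul_inv]
        exact mul_le_mul_of_nonneg_right (by nlinarith) (inv_nonneg.mpr hℏ.le)
      calc (∫ y in {y : ℝ | ε ≤ |y|}, Real.exp (-y ^ 2 / ℏ))
          ≤ ∫ y in {y : ℝ | ε ≤ |y|},
              Real.exp (-ε ^ 2 / (2 * ℏ)) * Real.exp (-(1/(2*ℏ)) * y ^ 2) := hmono
        _ ≤ ∫ y : ℝ, Real.exp (-ε ^ 2 / (2 * ℏ)) * Real.exp (-(1/(2*ℏ)) * y ^ 2) := by
            apply setIntegral_le_integral hint3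
            exact Eventually.of_forall fun y => by positivity
        _ = Real.exp (-ε ^ 2 / (2 * ℏ)) * Real.sqrt (Real.pi * (2 * ℏ)) := by
            rw [integral_const_mul, integral_gaussian]
            congr 1
            rw [div_div_eq_mul_div, div_one]
    have hs : Real.sqrt (Real.pi * (2 * ℏ)) = Real.sqrt 2 * Real.sqrt (Real.pi * ℏ) := by
      rw [← Real.sqrt_mul (by norm_num)]
      ring_nf
    have hspos : 0 < Real.sqrt (Real.pi * ℏ) := Real.sqrt_pos.mpr (by positivity)
    calc (1 / Real.sqrt (Real.pi * ℏ)) *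
          ∑' k : ℤ, ∫ x in (0 : ℝ)..(1 / 2), Real.exp (-(x - x₀ + k) ^ 2 / ℏ)
        ≤ (1 / Real.sqrt (Real.pi * ℏ)) * (Real.exp (-ε ^ 2 / (2 * ℏ)) * Real.sqrt (Real.pi * (2 * ℏ))) := by
          apply mul_le_mul_of_nonneg_left (le_trans hB hC) (by positivity)
      _ = Real.sqrt 2 * Real.exp (-ε ^ 2 / (2 * ℏ)) := by
          rw [hs]; field_simp
  -- squeeze
  have hbound : Tendsto (fun ℏ : ℝ => Real.sqrt 2 * Real.exp (-ε ^ 2 / (2 * ℏ)))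
      (nhdsWithin 0 (Set.Ioi 0)) (nhds 0) := by
    have h1 : Tendsto (fun ℏ : ℝ => -ε ^ 2 / (2 * ℏ)) (nhdsWithin 0 (Set.Ioi 0)) atBot := by
      have h2 : Tendsto (fun ℏ : ℝ => (ε ^ 2 / 2) * ℏ⁻¹) (nhdsWithin 0 (Set.Ioi 0)) atTop :=
        tendsto_inv_nhdsGT_zero.const_mul_atTop (by positivity)
      have h3 : Tendsto (fun ℏ : ℝ => -((ε ^ 2 / 2) * ℏ⁻¹)) (nhdsWithin 0 (Set.Ioi 0)) atBot :=
        tendsto_neg_atBot_iff.mpr h2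
      refine h3.congr fun ℏ => by field_simp
    have := Real.tendsto_exp_atBot.comp h1
    simpa using this.const_mul (Real.sqrt 2)
  refine tendsto_of_tendsto_of_tendsto_of_le_of_le' tendsto_const_nhds hbound
    (Eventually.of_forall hnonneg) ?_
  filter_upwards [self_mem_nhdsWithin] using key
end

section
/- The lifted baker's map β: ℝ² → ℝ², defined by β(x,p) = (2x, p/2) if (x,p) ∈ l∩e_p; (2x−1, p/2+1/2) if (x,p) ∈ r∩e_p; (2x+1, p/2+1/2) if (x,p) ∈ l∩o_p; (2x, p/2) if (x,p) ∈ r∩o_p, is a bijection of ℝ², with inverse β⁻¹(x,p) = (x/2, 2p) if (x,p) ∈ e_x∩b; (x/2−1/2, 2p−1) if (x,p) ∈ o_x∩b; (x/2+1/2, 2p−1) if (x,p) ∈ e_x∩t; (x/2, 2p) if (x,p) ∈ o_x∩t. -/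
lemma exA (x : ℝ) : (∃ k : ℤ, x - k ∈ Set.Ico (0:ℝ) (1/2)) ↔ Int.fract x < 1/2 := by
  constructor
  · rintro ⟨k, h0, h1⟩
    have h : Int.fract x = x - k := by
      rw [Int.fract_eq_iff]
      exact ⟨h0, by linarith, ⟨k, by ring⟩⟩
    linarith
  · intro h
    refine ⟨⌊x⌋, ?_, ?_⟩
    · have := Int.fract_nonneg x
      have hs := Int.self_sub_fract x
      linarith
    · have hs := Int.self_sub_fract x
      linarith

lemma exB (p : ℝ) : (∃ k : ℤ, p - 2*k ∈ Set.Ico (0:ℝ) 1) ↔ Int.fract (p/2) < 1/2 := by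
  rw [← exA]
  constructor <;> rintro ⟨k, h0, h1⟩ <;> exact ⟨k, by simp only [Set.mem_Ico] at *; constructor <;> linarith⟩

lemma fract_half (x : ℝ) : Int.fract (x + 1/2) < 1/2 ↔ ¬ (Int.fract x < 1/2) := by
  have hx0 := Int.fract_nonneg x
  have hx1 := Int.fract_lt_one x
  have hs := Int.self_sub_fract x
  by_cases h : Int.fract x < 1/2
  · have he : Int.fract (x + 1/2) = Int.fract x + 1/2 := by
      rw [Int.fract_eq_iff]
      exact ⟨by linarith, by linarith, ⟨⌊x⌋, by rw [← hs]; ring⟩⟩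
    rw [he]; constructor
    · intro h'; linarith
    · intro h'; exact absurd h h'
  · have he : Int.fract (x + 1/2) = Int.fract x - 1/2 := by
      rw [Int.fract_eq_iff]
      refine ⟨by linarith, by linarith, ⟨⌊x⌋ + 1, ?_⟩⟩
      push_cast; rw [← hs]; ring
    rw [he]
    constructor
    · intro _; exact h
    · intro _; linarith

lemma fract_half' (x : ℝ) : Int.fract (x - 1/2) < 1/2 ↔ ¬ (Int.fract x < 1/2) := by
  have : x - 1/2 = x + 1/2 - (1:ℤ) := by push_cast; ring
  rw [this, Int.fract_sub_intCast, fract_half]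


open Classical in

/-- The lifted baker's map `β : ℝ² → ℝ²` of eq. (2):
`(2x, p/2)` on `l ∩ e_p`; `(2x−1, p/2+1/2)` on `r ∩ e_p`;
`(2x+1, p/2+1/2)` on `l ∩ o_p`; `(2x, p/2)` on `r ∩ o_p`,
where `l = ([0,1/2)+ℤ)×ℝ`, `r = ([1/2,1)+ℤ)×ℝ`,
`e_p = ℝ×([0,1)+2ℤ)`, `o_p = ℝ×([1,2)+2ℤ)`. -/
noncomputable def bakerLift (z : ℝ × ℝ) : ℝ × ℝ :=
  if ∃ k : ℤ, z.1 - k ∈ Set.Ico (0 : ℝ) (1 / 2) then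
    if ∃ k : ℤ, z.2 - 2 * k ∈ Set.Ico (0 : ℝ) 1 then (2 * z.1, z.2 / 2)
    else (2 * z.1 + 1, z.2 / 2 + 1 / 2)
  else
    if ∃ k : ℤ, z.2 - 2 * k ∈ Set.Ico (0 : ℝ) 1 then (2 * z.1 - 1, z.2 / 2 + 1 / 2)
    else (2 * z.1, z.2 / 2)

open Classical in
/-- The claimed inverse of the lifted baker's map, eq. (5):
`(x/2, 2p)` on `e_x ∩ b`; `(x/2−1/2, 2p−1)` on `o_x ∩ b`;
`(x/2+1/2, 2p−1)` on `e_x ∩ t`; `(x/2, 2p)` on `o_x ∩ t`,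
where `b = ℝ×([0,1/2)+ℤ)`, `t = ℝ×([1/2,1)+ℤ)`,
`e_x = ([0,1)+2ℤ)×ℝ`, `o_x = ([1,2)+2ℤ)×ℝ`. -/
noncomputable def bakerLiftInv (z : ℝ × ℝ) : ℝ × ℝ :=
  if ∃ k : ℤ, z.1 - 2 * k ∈ Set.Ico (0 : ℝ) 1 then
    if ∃ k : ℤ, z.2 - k ∈ Set.Ico (0 : ℝ) (1 / 2) then (z.1 / 2, 2 * z.2)
    else (z.1 / 2 + 1 / 2, 2 * z.2 - 1)
  else
    if ∃ k : ℤ, z.2 - k ∈ Set.Ico (0 : ℝ) (1 / 2) then (z.1 / 2 - 1 / 2, 2 * z.2 - 1)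
    else (z.1 / 2, 2 * z.2)



open Classical in
lemma bakerLift_def (a b : ℝ) : bakerLift (a, b) =
    if Int.fract a < 1/2 then
      if Int.fract (b/2) < 1/2 then (2*a, b/2) else (2*a+1, b/2+1/2)
    else
      if Int.fract (b/2) < 1/2 then (2*a-1, b/2+1/2) else (2*a, b/2) := by
  simp only [bakerLift, exA, exB]

open Classical in
lemma bakerLiftInv_def (a b : ℝ) : bakerLiftInv (a, b) =
    if Int.fract (a/2) < 1/2 then
      if Int.fract b < 1/2 then (a/2, 2*b) else (a/2+1/2, 2*b-1)
    else
      if Int.fract b < 1/2 then (a/2-1/2, 2*b-1) else (a/2, 2*b) := by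
  simp only [bakerLiftInv, exA, exB]

lemma bakerLift_leftInv : Function.LeftInverse bakerLiftInv bakerLift := by
  rintro ⟨x, p⟩
  rw [bakerLift_def]
  by_cases hx : Int.fract x < 1/2 <;> by_cases hp : Int.fract (p/2) < 1/2
  · rw [if_pos hx, if_pos hp, bakerLiftInv_def]
    have e1 : (2*x)/2 = x := by ring
    rw [e1, if_pos hx, if_pos hp]
    simp only [Prod.mk.injEq]; exact ⟨trivial, by ring⟩
  · rw [if_pos hx, if_neg hp, bakerLiftInv_def]
    have e1 : (2*x+1)/2 = x + 1/2 := by ring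
    have h1 : ¬ Int.fract (x + 1/2) < 1/2 := by rw [fract_half]; exact not_not_intro hx
    have h2 : Int.fract (p/2 + 1/2) < 1/2 := (fract_half _).mpr hp
    rw [e1, if_neg h1, if_pos h2]
    simp only [Prod.mk.injEq]; constructor <;> ring
  · rw [if_neg hx, if_pos hp, bakerLiftInv_def]
    have e1 : (2*x-1)/2 = x - 1/2 := by ring
    have h1 : Int.fract (x - 1/2) < 1/2 := (fract_half' _).mpr hx
    have h2 : ¬ Int.fract (p/2 + 1/2) < 1/2 := by rw [fract_half]; exact not_not_intro hp
    rw [e1, if_pos h1, if_neg h2]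
    simp only [Prod.mk.injEq]; constructor <;> ring
  · rw [if_neg hx, if_neg hp, bakerLiftInv_def]
    have e1 : (2*x)/2 = x := by ring
    rw [e1, if_neg hx, if_neg hp]
    simp only [Prod.mk.injEq]; exact ⟨trivial, by ring⟩

lemma bakerLift_rightInv : Function.RightInverse bakerLiftInv bakerLift := by
  rintro ⟨x, p⟩
  rw [bakerLiftInv_def]
  by_cases hx : Int.fract (x/2) < 1/2 <;> by_cases hp : Int.fract p < 1/2
  · rw [if_pos hx, if_pos hp, bakerLift_def]
    have e1 : (2*p)/2 = p := by ring
    rw [e1, if_pos hx, if_pos hp]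
    simp only [Prod.mk.injEq]; exact ⟨by ring, trivial⟩
  · rw [if_pos hx, if_neg hp, bakerLift_def]
    have e1 : (2*p-1)/2 = p - 1/2 := by ring
    have h1 : ¬ Int.fract (x/2 + 1/2) < 1/2 := by rw [fract_half]; exact not_not_intro hx
    have h2 : Int.fract (p - 1/2) < 1/2 := (fract_half' _).mpr hp
    rw [e1, if_neg h1, if_pos h2]
    simp only [Prod.mk.injEq]; constructor <;> ring
  · rw [if_neg hx, if_pos hp, bakerLift_def]
    have e1 : (2*p-1)/2 = p - 1/2 := by ring
    have h1 : Int.fract (x/2 - 1/2) < 1/2 := (fract_half' _).mpr hx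
    have h2 : ¬ Int.fract (p - 1/2) < 1/2 := by rw [fract_half']; exact not_not_intro hp
    rw [e1, if_pos h1, if_neg h2]
    simp only [Prod.mk.injEq]; constructor <;> ring
  · rw [if_neg hx, if_neg hp, bakerLift_def]
    have e1 : (2*p)/2 = p := by ring
    rw [e1, if_neg hx, if_neg hp]
    simp only [Prod.mk.injEq]; exact ⟨by ring, trivial⟩

/-- The lifted baker's map is a bijection of `ℝ²`, with inverse `bakerLiftInv`. -/
theorem bakerLift_bijective :
    Function.Bijective bakerLift ∧
      Function.LeftInverse bakerLiftInv bakerLift ∧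
      Function.RightInverse bakerLiftInv bakerLift := by
  exact ⟨Function.bijective_iff_has_inverse.mpr ⟨bakerLiftInv, bakerLift_leftInv, bakerLift_rightInv⟩,
    bakerLift_leftInv, bakerLift_rightInv⟩
end

section
/- For β the lifted baker's map and integers a, b, the pullback satisfies β*e^{2πi(ax+bp)}(x,p) = e^{4πiax}·e^{iπb p}·(χ_l(x) + (−1)^b χ_r(x))·(χ_{e_p}(p) + (−1)^b χ_{o_p}(p)), where χ denotes the indicator function of the corresponding 1- or 2-periodic set. -/
lemma exL (x : ℝ) : (∃ k : ℤ, x - k ∈ Set.Ico (0 : ℝ) (1 / 2)) ↔ Int.fract x < 1/2 := by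
  constructor
  · rintro ⟨k, h0, h1⟩
    have : Int.fract x = x - k := by
      rw [← Int.fract_sub_intCast x k]; exact Int.fract_eq_self.mpr ⟨h0, by linarith⟩
    linarith
  · intro h
    exact ⟨⌊x⌋, Int.fract_nonneg x, h⟩

lemma exR (x : ℝ) : (∃ k : ℤ, x - k ∈ Set.Ico (1 / 2 : ℝ) 1) ↔ 1/2 ≤ Int.fract x := by
  constructor
  · rintro ⟨k, h0, h1⟩
    have : Int.fract x = x - k := by
      rw [← Int.fract_sub_intCast x k]; exact Int.fract_eq_self.mpr ⟨by linarith, h1⟩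
    linarith
  · intro h
    exact ⟨⌊x⌋, h, Int.fract_lt_one x⟩

lemma exE (p : ℝ) : (∃ k : ℤ, p - 2 * k ∈ Set.Ico (0 : ℝ) 1) ↔ Int.fract (p/2) < 1/2 := by
  constructor
  · rintro ⟨k, h0, h1⟩
    have : Int.fract (p/2) = p/2 - k := by
      rw [← Int.fract_sub_intCast (p/2) k]
      exact Int.fract_eq_self.mpr ⟨by linarith, by linarith⟩
    linarith
  · intro h
    have h0 := Int.fract_nonneg (p/2)
    have he : Int.fract (p/2) = p/2 - ⌊p/2⌋ := rfl
    exact ⟨⌊p/2⌋, by rw [he] at h0 h; constructor <;> [linarith; linarith]⟩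

lemma exO (p : ℝ) : (∃ k : ℤ, p - 2 * k ∈ Set.Ico (1 : ℝ) 2) ↔ 1/2 ≤ Int.fract (p/2) := by
  constructor
  · rintro ⟨k, h0, h1⟩
    have : Int.fract (p/2) = p/2 - k := by
      rw [← Int.fract_sub_intCast (p/2) k]
      exact Int.fract_eq_self.mpr ⟨by linarith, by linarith⟩
    linarith
  · intro h
    have h1 := Int.fract_lt_one (p/2)
    have he : Int.fract (p/2) = p/2 - ⌊p/2⌋ := rfl
    exact ⟨⌊p/2⌋, by rw [he] at h1 h; constructor <;> [linarith; linarith]⟩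

lemma negpow (b : ℤ) : Complex.exp (Real.pi * Complex.I * b) = (-1:ℂ)^b := by
  rw [show (Real.pi : ℂ) * Complex.I * b = b * (Real.pi * Complex.I) by ring,
    Complex.exp_int_mul, Complex.exp_pi_mul_I]

lemma expa (a : ℤ) : Complex.exp (2 * Real.pi * Complex.I * a) = 1 := by
  rw [show (2:ℂ) * Real.pi * Complex.I * a = a * (2 * Real.pi * Complex.I) by ring]
  exact Complex.exp_int_mul_two_pi_mul_I a


open Classical in
/-- For integers `a, b`, the pullback of `e^{2πi(ax+bp)}` under `β` satisfies
`β*e^{2πi(ax+bp)}(x,p)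
  = e^{4πiax}·e^{iπbp}·(χ_l(x) + (−1)^b χ_r(x))·(χ_{e_p}(p) + (−1)^b χ_{o_p}(p))`. -/
theorem bakerLift_pullback (a b : ℤ) (x p : ℝ) :
    Complex.exp (2 * Real.pi * Complex.I *
        ((a : ℂ) * ((bakerLift (x, p)).1 : ℂ) + (b : ℂ) * ((bakerLift (x, p)).2 : ℂ)))
      = Complex.exp (4 * Real.pi * Complex.I * (a : ℂ) * (x : ℂ)) *
        Complex.exp (Real.pi * Complex.I * (b : ℂ) * (p : ℂ)) *
        ((if ∃ k : ℤ, x - k ∈ Set.Ico (0 : ℝ) (1 / 2) then (1 : ℂ) else 0) +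
          (-1 : ℂ) ^ b * (if ∃ k : ℤ, x - k ∈ Set.Ico (1 / 2 : ℝ) 1 then (1 : ℂ) else 0)) *
        ((if ∃ k : ℤ, p - 2 * k ∈ Set.Ico (0 : ℝ) 1 then (1 : ℂ) else 0) +
          (-1 : ℂ) ^ b * (if ∃ k : ℤ, p - 2 * k ∈ Set.Ico (1 : ℝ) 2 then (1 : ℂ) else 0)) := by
  rcases lt_or_ge (Int.fract x) (1/2) with hx | hx <;>
    rcases lt_or_ge (Int.fract (p/2)) (1/2) with hp | hp
  · have hL := (exL x).mpr hx
    have hE := (exE p).mpr hp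
    have nR : ¬ ∃ k : ℤ, x - k ∈ Set.Ico (1/2 : ℝ) 1 :=
      fun h => absurd ((exR x).mp h) (not_le.mpr hx)
    have nO : ¬ ∃ k : ℤ, p - 2*k ∈ Set.Ico (1 : ℝ) 2 :=
      fun h => absurd ((exO p).mp h) (not_le.mpr hp)
    have hb : bakerLift (x, p) = (2*x, p/2) := by
      simp only [bakerLift]; rw [if_pos hL, if_pos hE]
    rw [hb, if_pos hL, if_pos hE, if_neg nR, if_neg nO]
    rw [mul_zero, add_zero, mul_one, mul_one, ← Complex.exp_add]
    congr 1; push_cast; ring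
  · have hL := (exL x).mpr hx
    have nE : ¬ ∃ k : ℤ, p - 2*k ∈ Set.Ico (0 : ℝ) 1 :=
      fun h => absurd ((exE p).mp h) (not_lt.mpr hp)
    have nR : ¬ ∃ k : ℤ, x - k ∈ Set.Ico (1/2 : ℝ) 1 :=
      fun h => absurd ((exR x).mp h) (not_le.mpr hx)
    have hO := (exO p).mpr hp
    have hb : bakerLift (x, p) = (2*x + 1, p/2 + 1/2) := by
      simp only [bakerLift]; rw [if_pos hL, if_neg nE]
    rw [hb, if_pos hL, if_pos hO, if_neg nR, if_neg nE]
    rw [mul_zero, add_zero, mul_one, mul_one, zero_add]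
    have key : (2 : ℂ) * Real.pi * Complex.I * (a * (2*x + 1 : ℝ) + b * (p/2 + 1/2 : ℝ))
        = (4 * Real.pi * Complex.I * a * x + Real.pi * Complex.I * b * p)
          + 2 * Real.pi * Complex.I * a + Real.pi * Complex.I * b := by push_cast; ring
    rw [key, Complex.exp_add, Complex.exp_add, Complex.exp_add, expa, negpow]
    ring
  · have nL : ¬ ∃ k : ℤ, x - k ∈ Set.Ico (0 : ℝ) (1/2) :=
      fun h => absurd ((exL x).mp h) (not_lt.mpr hx)
    have hR := (exR x).mpr hx
    have hE := (exE p).mpr hp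
    have nO : ¬ ∃ k : ℤ, p - 2*k ∈ Set.Ico (1 : ℝ) 2 :=
      fun h => absurd ((exO p).mp h) (not_le.mpr hp)
    have hb : bakerLift (x, p) = (2*x - 1, p/2 + 1/2) := by
      simp only [bakerLift]; rw [if_neg nL, if_pos hE]
    rw [hb, if_pos hR, if_pos hE, if_neg nL, if_neg nO]
    rw [mul_zero, add_zero, mul_one, mul_one, zero_add]
    have key : (2 : ℂ) * Real.pi * Complex.I * (a * (2*x - 1 : ℝ) + b * (p/2 + 1/2 : ℝ))
        = (4 * Real.pi * Complex.I * a * x + Real.pi * Complex.I * b * p)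
          + 2 * Real.pi * Complex.I * ((-a : ℤ) : ℂ) + Real.pi * Complex.I * b := by
      push_cast; ring
    rw [key, Complex.exp_add, Complex.exp_add, Complex.exp_add, expa (-a), negpow]
    ring
  · have nL : ¬ ∃ k : ℤ, x - k ∈ Set.Ico (0 : ℝ) (1/2) :=
      fun h => absurd ((exL x).mp h) (not_lt.mpr hx)
    have hR := (exR x).mpr hx
    have nE : ¬ ∃ k : ℤ, p - 2*k ∈ Set.Ico (0 : ℝ) 1 :=
      fun h => absurd ((exE p).mp h) (not_lt.mpr hp)
    have hO := (exO p).mpr hp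
    have hb : bakerLift (x, p) = (2*x, p/2) := by
      simp only [bakerLift]; rw [if_neg nL, if_neg nE]
    rw [hb, if_pos hR, if_pos hO, if_neg nL, if_neg nE]
    rw [mul_one, zero_add]
    have hbb : (-1 : ℂ)^b * (-1 : ℂ)^b = 1 := by
      rw [← mul_zpow]; norm_num
    rw [← Complex.exp_add]
    calc Complex.exp (2 * Real.pi * Complex.I * (a * ((2*x : ℝ) : ℂ) + b * ((p/2 : ℝ) : ℂ)))
        = Complex.exp (4 * Real.pi * Complex.I * a * x + Real.pi * Complex.I * b * p) := by
          congr 1; push_cast; ring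
      _ = _ := by
          rw [Complex.exp_add]
          rw [show Complex.exp (4 * Real.pi * Complex.I * a * x) *
              Complex.exp (Real.pi * Complex.I * b * p) * (-1:ℂ)^b * (-1:ℂ)^b
            = Complex.exp (4 * Real.pi * Complex.I * a * x) *
              Complex.exp (Real.pi * Complex.I * b * p) * ((-1:ℂ)^b * (-1:ℂ)^b) by ring, hbb,
            mul_one]
end

section
/- For h = 1/N (ℏ = 1/(2πN)), the delta-comb vectors satisfy the discrete Fourier relation: Φ_m^{(θ)} = e^{−2πiθ₁θ₂/N} ∑_{n=0}^{N−1} (F^N)_{mn} Φ̃_n^{(θ)}, where Φ_m^{(θ)} = (e^{2πiθ₂m/N}/√N) ∑_{k∈ℤ} e^{2πiθ₂k} |(θ₁+m)/N + k⟩_x and Φ̃_n^{(θ)} = (e^{−2πinθ₁/N}/√N) ∑_{k∈ℤ} e^{−2πiθ₁k} |(θ₂+n)/N + k⟩_p. Equivalently, as tempered distributions, the Fourier transform (with ℏ = 1/2πN) of the x-delta-comb Φ_m^{(θ)} equals e^{−2πiθ₁θ₂/N} ∑_n (F^N)_{mn} times the p-delta-comb Φ̃_n^{(θ)}. -/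
open MeasureTheory Finset

section DeltaCombAux

open Complex Filter Asymptotics
open scoped FourierTransform Real

private lemma dc_orth_sum (N : ℕ) (hN : 0 < N) (d : ℤ) :
    ∑ n ∈ Finset.range N, Complex.exp (2 * Real.pi * Complex.I * d * n / N) =
      if (N : ℤ) ∣ d then (N : ℂ) else 0 := by
  have hNC : (N : ℂ) ≠ 0 := Nat.cast_ne_zero.mpr hN.ne'
  have hr : ∀ n : ℕ, Complex.exp (2 * Real.pi * Complex.I * d * n / N)
      = Complex.exp (2 * Real.pi * Complex.I * d / N) ^ n := fun n => by
    rw [← Complex.exp_nat_mul]; congr 1; ring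
  simp only [hr]
  by_cases h : (N : ℤ) ∣ d
  · obtain ⟨e, he⟩ := h
    have h1 : Complex.exp (2 * Real.pi * Complex.I * d / N) = 1 := by
      have hd : (d : ℂ) = N * e := by exact_mod_cast he
      have harg : (2 * Real.pi * Complex.I * d / N : ℂ) = e * (2 * Real.pi * Complex.I) := by
        rw [hd]; field_simp
      rw [harg, Complex.exp_int_mul_two_pi_mul_I]
    simp [h1, show ((N : ℤ) ∣ d) from ⟨e, he⟩]
  · have hr1 : Complex.exp (2 * Real.pi * Complex.I * d / N) ≠ 1 := by
      intro hc
      rw [Complex.exp_eq_one_iff] at hc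
      obtain ⟨e, he⟩ := hc
      apply h
      refine ⟨e, ?_⟩
      have : (d : ℂ) = N * e := by
        have h2 : (2 * (Real.pi : ℂ) * Complex.I) ≠ 0 := Complex.two_pi_I_ne_zero
        field_simp at he
        have h3 : (d : ℂ) * (2 * (Real.pi : ℂ) * Complex.I)
            = ((N : ℂ) * e) * (2 * (Real.pi : ℂ) * Complex.I) := by linear_combination (2 * (Real.pi : ℂ) * Complex.I) * he
        exact mul_right_cancel₀ h2 h3
      exact_mod_cast this
    rw [geom_sum_eq hr1]
    have hpow : Complex.exp (2 * Real.pi * Complex.I * d / N) ^ N = 1 := by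
      rw [← Complex.exp_nat_mul]
      have : (N : ℂ) * (2 * Real.pi * Complex.I * d / N) = d * (2 * Real.pi * Complex.I) := by
        field_simp
      rw [this, Complex.exp_int_mul_two_pi_mul_I]
    rw [hpow]
    simp [h]

private lemma dc_abs_shift_isBigO (a : ℝ) :
    (fun x : ℝ => |x + a| ^ (-2 : ℝ)) =O[cocompact ℝ] (fun x : ℝ => |x| ^ (-2 : ℝ)) := by
  rw [isBigO_iff]
  refine ⟨4, ?_⟩
  filter_upwards [tendsto_norm_cocompact_atTop.eventually_ge_atTop (2 * (|a| + 1))] with x hx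
  have hx' : 2 * (|a| + 1) ≤ |x| := hx
  have h0 : (0 : ℝ) < |x| := lt_of_lt_of_le (by positivity) hx'
  have habs : |x| ≤ |x + a| + |a| := by
    calc |x| = |(x + a) + -a| := by ring_nf
    _ ≤ |x + a| + |-a| := abs_add_le _ _
    _ = |x + a| + |a| := by rw [abs_neg]
  have h1 : |x| / 2 ≤ |x + a| := by linarith
  have h2 : (0 : ℝ) < |x| / 2 := by positivity
  have e1 : ∀ t : ℝ, 0 < t → t ^ (-2 : ℝ) = (t ^ 2)⁻¹ := fun t ht => by
    rw [show (-2 : ℝ) = -(2 : ℕ) by norm_num, Real.rpow_neg ht.le, Real.rpow_natCast]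
  rw [Real.norm_of_nonneg (Real.rpow_nonneg (abs_nonneg _) _),
      Real.norm_of_nonneg (Real.rpow_nonneg (abs_nonneg _) _)]
  rw [e1 _ (lt_of_lt_of_le h2 h1), e1 _ h0]
  have hple : (|x| / 2) ^ 2 ≤ |x + a| ^ 2 := pow_le_pow_left₀ h2.le h1 2
  have hinv : (|x + a| ^ 2)⁻¹ ≤ ((|x| / 2) ^ 2)⁻¹ := inv_anti₀ (by positivity) hple
  calc (|x + a| ^ 2)⁻¹ ≤ ((|x| / 2) ^ 2)⁻¹ := hinv
    _ = 4 * (|x| ^ 2)⁻¹ := by field_simp; ring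

variable (g : SchwartzMap ℝ ℂ) (a : ℝ)

private lemma dc_mod_def (y : ℝ) :
    (𝐞 (-(a * y)) • g y : ℂ) = Complex.exp (-(2 * Real.pi * a * y) * Complex.I) * g y := by
  rw [Circle.smul_def, Real.fourierChar_apply]
  push_cast
  ring_nf

private lemma dc_mod_cont : Continuous fun y : ℝ => (𝐞 (-(a * y)) • g y : ℂ) := by
  refine Continuous.smul ?_ g.continuous
  exact continuous_subtype_val.comp (Real.continuous_fourierChar.comp (continuous_const.mul continuous_id).neg)

private lemma dc_mod_fourier (ξ : ℝ) :
    𝓕 (fun y : ℝ => (𝐞 (-(a * y)) • g y : ℂ)) ξ = 𝓕 ⇑g (ξ + a) := by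
  rw [Real.fourier_real_eq, Real.fourier_real_eq]
  congr 1
  funext y
  rw [smul_smul, ← AddChar.map_add_eq_mul]
  congr 1
  ring

private lemma dc_mod_isBigO :
    (fun y : ℝ => (𝐞 (-(a * y)) • g y : ℂ)) =O[cocompact ℝ] (fun x : ℝ => |x| ^ (-2 : ℝ)) := by
  refine IsBigO.trans ?_ (g.isBigO_cocompact_rpow (-2))
  exact isBigO_of_le _ fun y => by rw [Circle.norm_smul]

private lemma dc_shift_tendsto : Tendsto (fun x : ℝ => x + a) (cocompact ℝ) (cocompact ℝ) :=
  le_of_eq (Homeomorph.addRight a).map_cocompact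

private lemma dc_Fg_shift_isBigO :
    (fun x : ℝ => 𝓕 ⇑g (x + a)) =O[cocompact ℝ] (fun x : ℝ => |x| ^ (-2 : ℝ)) := by
  have h1 : ⇑(SchwartzMap.fourierTransformCLM ℝ g) =O[cocompact ℝ] fun x : ℝ => ‖x‖ ^ (-2 : ℝ) :=
    SchwartzMap.isBigO_cocompact_rpow _ _
  have h2 := h1.comp_tendsto (dc_shift_tendsto a)
  simp only [SchwartzMap.fourierTransformCLM_apply, Function.comp_def] at h2
  exact h2.trans (dc_abs_shift_isBigO a)

private lemma dc_mod_fourier_isBigO :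
    (𝓕 fun y : ℝ => (𝐞 (-(a * y)) • g y : ℂ)) =O[cocompact ℝ] (fun x : ℝ => |x| ^ (-2 : ℝ)) := by
  have h : (𝓕 fun y : ℝ => (𝐞 (-(a * y)) • g y : ℂ)) = fun ξ => 𝓕 ⇑g (ξ + a) :=
    funext fun ξ => dc_mod_fourier g a ξ
  rw [h]
  exact dc_Fg_shift_isBigO g a

private lemma dc_poisson (x : ℝ) :
    ∑' k : ℤ, (𝐞 (-(a * (x + k))) • g (x + k) : ℂ)
      = ∑' j : ℤ, 𝓕 ⇑g (j + a) * fourier j (x : UnitAddCircle) := by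
  have h := Real.tsum_eq_tsum_fourier_of_rpow_decay (dc_mod_cont g a) one_lt_two
    (dc_mod_isBigO g a) (dc_mod_fourier_isBigO g a) x
  simpa only [dc_mod_fourier g a] using h

private lemma dc_summable_norm : Summable fun j : ℤ => ‖𝓕 ⇑g ((j : ℝ) + a)‖ := by
  have h4 := ((dc_Fg_shift_isBigO g a).norm_left).comp_tendsto Int.tendsto_coe_cofinite
  exact summable_of_isBigO (Real.summable_abs_int_rpow one_lt_two) h4

private lemma dc_fourier_norm_one (j : ℤ) (x : ℝ) :
    ‖(fourier j (x : UnitAddCircle) : ℂ)‖ = 1 := by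
  rw [fourier_coe_apply]
  rw [Complex.norm_exp]
  norm_num

end DeltaCombAux

/-- For `h = 1/N` (`ℏ = 1/(2πN)`), the `x`-delta-comb
`Φ_m^{(θ)} = (e^{2πiθ₂m/N}/√N) ∑_k e^{2πiθ₂k} |(θ₁+m)/N + k⟩_x` is carried by the
(distributional) `ℏ`-Fourier transform onto
`e^{−2πiθ₁θ₂/N} ∑_{n=0}^{N−1} (F^N)_{mn} Φ̃_n^{(θ)}`, where
`Φ̃_n^{(θ)} = (e^{−2πinθ₁/N}/√N) ∑_k e^{−2πiθ₁k} |(θ₂+n)/N + k⟩_p` and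
`(F^N)_{mn} = e^{−2πimn/N}/√N`.  Stated by pairing both sides against an arbitrary
Schwartz test function `g` of the momentum variable: the momentum-space wave
function of `|x₀⟩_x` is `p ↦ e^{−ipx₀/ℏ}/√(2πℏ)`, and `|p₀⟩_p` pairs with `g` as
evaluation `g(p₀)`. -/
theorem delta_comb_discrete_fourier (N : ℕ) (hN : 0 < N)
    (θ₁ θ₂ : ℝ) (hθ₁ : θ₁ ∈ Set.Ico (0 : ℝ) 1) (hθ₂ : θ₂ ∈ Set.Ico (0 : ℝ) 1)
    (m : ℕ) (hm : m < N) (g : SchwartzMap ℝ ℂ) :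
    let ℏ : ℝ := 1 / (2 * Real.pi * N)
    (Complex.exp (2 * Real.pi * Complex.I * θ₂ * m / N) / Real.sqrt N) *
        ∑' k : ℤ,
          Complex.exp (2 * Real.pi * Complex.I * θ₂ * k) *
            (((Real.sqrt (2 * Real.pi * ℏ) : ℝ) : ℂ)⁻¹ *
              ∫ p : ℝ,
                Complex.exp (-Complex.I * (p : ℂ) *
                    (((θ₁ + m) / N + k : ℝ) : ℂ) / (ℏ : ℂ)) * g p)
      = Complex.exp (-2 * Real.pi * Complex.I * θ₁ * θ₂ / N) *
          ∑ n ∈ Finset.range N,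
            (Complex.exp (-2 * Real.pi * Complex.I * m * n / N) / Real.sqrt N) *
              ((Complex.exp (-2 * Real.pi * Complex.I * n * θ₁ / N) / Real.sqrt N) *
                ∑' k : ℤ,
                  Complex.exp (-2 * Real.pi * Complex.I * θ₁ * k) *
                    g (((θ₂ + n) / N + k : ℝ))) := by
  intro ℏ
  have hℏ : ℏ = 1 / (2 * Real.pi * N) := rfl
  have hNR : (0 : ℝ) < (N : ℝ) := by exact_mod_cast hN
  have hNC : ((N : ℕ) : ℂ) ≠ 0 := Nat.cast_ne_zero.mpr hN.ne'
  have hπ : Real.pi ≠ 0 := Real.pi_ne_zero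
  have hπC : (Real.pi : ℂ) ≠ 0 := Complex.ofReal_ne_zero.mpr hπ
  have hsqN : ((Real.sqrt N : ℝ) : ℂ) ≠ 0 :=
    Complex.ofReal_ne_zero.mpr (ne_of_gt (Real.sqrt_pos.mpr hNR))
  -- √(2πℏ)⁻¹ = √N
  have h2πℏ : 2 * Real.pi * ℏ = ((N : ℝ))⁻¹ := by
    rw [hℏ]; field_simp
  have hsq : (((Real.sqrt (2 * Real.pi * ℏ) : ℝ)) : ℂ)⁻¹ = ((Real.sqrt N : ℝ) : ℂ) := by
    rw [h2πℏ, Real.sqrt_inv, Complex.ofReal_inv, inv_inv]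
  -- the inner integral is a Fourier transform value
  have hint : ∀ k : ℤ,
      (∫ p : ℝ, Complex.exp (-Complex.I * (p : ℂ) *
          (((θ₁ + m) / N + k : ℝ) : ℂ) / (ℏ : ℂ)) * g p)
        = FourierTransform.fourier ⇑g (θ₁ + m + k * N) := by
    intro k
    rw [Real.fourier_real_eq_integral_exp_smul]
    congr 1
    funext p
    rw [smul_eq_mul]
    congr 1
    rw [hℏ]
    congr 1
    push_cast
    field_simp [hNC]
  -- LHS reduction
  have hL : (Complex.exp (2 * Real.pi * Complex.I * θ₂ * m / N) / Real.sqrt N) *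
        ∑' k : ℤ,
          Complex.exp (2 * Real.pi * Complex.I * θ₂ * k) *
            (((Real.sqrt (2 * Real.pi * ℏ) : ℝ) : ℂ)⁻¹ *
              ∫ p : ℝ,
                Complex.exp (-Complex.I * (p : ℂ) *
                    (((θ₁ + m) / N + k : ℝ) : ℂ) / (ℏ : ℂ)) * g p)
      = Complex.exp (2 * Real.pi * Complex.I * θ₂ * m / N) *
          ∑' k : ℤ, Complex.exp (2 * Real.pi * Complex.I * θ₂ * k) *
            FourierTransform.fourier ⇑g (θ₁ + m + k * N) := by
    have e1 : ∀ k : ℤ,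
        Complex.exp (2 * Real.pi * Complex.I * θ₂ * k) *
            (((Real.sqrt (2 * Real.pi * ℏ) : ℝ) : ℂ)⁻¹ *
              ∫ p : ℝ,
                Complex.exp (-Complex.I * (p : ℂ) *
                    (((θ₁ + m) / N + k : ℝ) : ℂ) / (ℏ : ℂ)) * g p)
        = ((Real.sqrt N : ℝ) : ℂ) *
            (Complex.exp (2 * Real.pi * Complex.I * θ₂ * k) *
              FourierTransform.fourier ⇑g (θ₁ + m + k * N)) := by
      intro k
      rw [hsq, hint k]
      ring
    rw [tsum_congr e1, tsum_mul_left, ← mul_assoc, div_mul_cancel₀ _ hsqN]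
  -- Poisson summation applied to each inner sum on the RHS
  have step1 : ∀ n : ℕ,
      (∑' k : ℤ,
          Complex.exp (-2 * Real.pi * Complex.I * θ₁ * k) * g (((θ₂ + n) / N + k : ℝ)))
        = Complex.exp (2 * Real.pi * Complex.I * θ₁ * (((θ₂ + n) / N : ℝ) : ℂ)) *
            ∑' j : ℤ, FourierTransform.fourier ⇑g ((j : ℝ) + θ₁) *
              fourier j ((((θ₂ + n) / N : ℝ)) : UnitAddCircle) := by
    intro n
    have e1 : ∀ k : ℤ,
        Complex.exp (-2 * Real.pi * Complex.I * θ₁ * k) * g (((θ₂ + n) / N + k : ℝ))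
          = Complex.exp (2 * Real.pi * Complex.I * θ₁ * (((θ₂ + n) / N : ℝ) : ℂ)) *
            ((Real.fourierChar (-(θ₁ * (((θ₂ + n) / N : ℝ) + (k : ℝ)))) : Circle) •
              g ((((θ₂ + n) / N : ℝ)) + (k : ℝ)) : ℂ) := by
      intro k
      rw [dc_mod_def g θ₁ _, ← mul_assoc, ← Complex.exp_add]
      congr 2
      push_cast
      ring
    rw [tsum_congr e1, tsum_mul_left, dc_poisson g θ₁ ((θ₂ + n) / N)]
  -- collapse the coefficient product
  have hss : ((Real.sqrt N : ℝ) : ℂ) * ((Real.sqrt N : ℝ) : ℂ) = ((N : ℕ) : ℂ) := by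
    rw [← Complex.ofReal_mul, Real.mul_self_sqrt hNR.le, Complex.ofReal_natCast]
  have hcoef : ∀ n : ℕ,
      Complex.exp (-2 * Real.pi * Complex.I * θ₁ * θ₂ / N) *
        ((Complex.exp (-2 * Real.pi * Complex.I * m * n / N) / Real.sqrt N) *
          ((Complex.exp (-2 * Real.pi * Complex.I * n * θ₁ / N) / Real.sqrt N) *
            Complex.exp (2 * Real.pi * Complex.I * θ₁ * (((θ₂ + n) / N : ℝ) : ℂ))))
        = Complex.exp (-2 * Real.pi * Complex.I * m * n / N) / N := by
    intro n
    rw [show Complex.exp (-2 * Real.pi * Complex.I * θ₁ * θ₂ / N) *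
        ((Complex.exp (-2 * Real.pi * Complex.I * m * n / N) / Real.sqrt N) *
          ((Complex.exp (-2 * Real.pi * Complex.I * n * θ₁ / N) / Real.sqrt N) *
            Complex.exp (2 * Real.pi * Complex.I * θ₁ * (((θ₂ + n) / N : ℝ) : ℂ))))
      = (Complex.exp (-2 * Real.pi * Complex.I * θ₁ * θ₂ / N) *
          Complex.exp (-2 * Real.pi * Complex.I * m * n / N) *
          Complex.exp (-2 * Real.pi * Complex.I * n * θ₁ / N) *
          Complex.exp (2 * Real.pi * Complex.I * θ₁ * (((θ₂ + n) / N : ℝ) : ℂ))) /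
        (((Real.sqrt N : ℝ) : ℂ) * ((Real.sqrt N : ℝ) : ℂ)) from by ring]
    rw [hss, ← Complex.exp_add, ← Complex.exp_add, ← Complex.exp_add]
    congr 2
    push_cast
    field_simp [hNC]
    ring
  -- summability needed for exchanging the sums
  have hsumm : ∀ n ∈ Finset.range N, Summable fun j : ℤ =>
      (Complex.exp (-2 * Real.pi * Complex.I * m * n / N) / N) *
        (FourierTransform.fourier ⇑g ((j : ℝ) + θ₁) *
          fourier j ((((θ₂ + n) / N : ℝ)) : UnitAddCircle)) := by
    intro n _
    apply Summable.of_norm_bounded (g := fun j : ℤ => ‖(Complex.exp (-2 * Real.pi * Complex.I * m * n / N) / (N : ℂ))‖ *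
        ‖FourierTransform.fourier ⇑g ((j : ℝ) + θ₁)‖)
      ((dc_summable_norm g θ₁).mul_left _)
    intro j
    rw [norm_mul, norm_mul, dc_fourier_norm_one, mul_one]
  have hrearr : ∀ E A B C S : ℂ, E * (A * (B * (C * S))) = (E * (A * (B * C))) * S := by
    intros; ring
  -- RHS reduction
  have hR : Complex.exp (-2 * Real.pi * Complex.I * θ₁ * θ₂ / N) *
          ∑ n ∈ Finset.range N,
            (Complex.exp (-2 * Real.pi * Complex.I * m * n / N) / Real.sqrt N) *
              ((Complex.exp (-2 * Real.pi * Complex.I * n * θ₁ / N) / Real.sqrt N) *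
                ∑' k : ℤ,
                  Complex.exp (-2 * Real.pi * Complex.I * θ₁ * k) *
                    g (((θ₂ + n) / N + k : ℝ)))
      = Complex.exp (2 * Real.pi * Complex.I * θ₂ * m / N) *
          ∑' k : ℤ, Complex.exp (2 * Real.pi * Complex.I * θ₂ * k) *
            FourierTransform.fourier ⇑g (θ₁ + m + k * N) := by
    have key : ∀ k : ℤ,
        (fun j : ℤ => if (N : ℤ) ∣ (j - m) then
            FourierTransform.fourier ⇑g ((j : ℝ) + θ₁) *
              Complex.exp (2 * Real.pi * Complex.I * j * θ₂ / N) else 0) ((m : ℤ) + k * N)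
          = Complex.exp (2 * Real.pi * Complex.I * θ₂ * m / N) *
              (Complex.exp (2 * Real.pi * Complex.I * θ₂ * k) *
                FourierTransform.fourier ⇑g (θ₁ + m + k * N)) := by
      intro k
      have hdvd : (N : ℤ) ∣ ((m : ℤ) + k * N - m) := ⟨k, by ring⟩
      simp only []
      rw [if_pos hdvd]
      have harg : ((((m : ℤ) + k * N : ℤ)) : ℝ) + θ₁ = θ₁ + (m : ℝ) + (k : ℝ) * (N : ℝ) := by
        push_cast; ring
      rw [harg]
      have hexp : Complex.exp (2 * Real.pi * Complex.I * (((m : ℤ) + k * N : ℤ) : ℂ) * θ₂ / N)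
          = Complex.exp (2 * Real.pi * Complex.I * θ₂ * m / N) *
            Complex.exp (2 * Real.pi * Complex.I * θ₂ * k) := by
        rw [← Complex.exp_add]
        congr 1
        push_cast
        field_simp [hNC]
      rw [hexp]
      ring
    calc
      Complex.exp (-2 * Real.pi * Complex.I * θ₁ * θ₂ / N) *
          ∑ n ∈ Finset.range N,
            (Complex.exp (-2 * Real.pi * Complex.I * m * n / N) / Real.sqrt N) *
              ((Complex.exp (-2 * Real.pi * Complex.I * n * θ₁ / N) / Real.sqrt N) *
                ∑' k : ℤ,
                  Complex.exp (-2 * Real.pi * Complex.I * θ₁ * k) *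
                    g (((θ₂ + n) / N + k : ℝ)))
        = ∑ n ∈ Finset.range N, ∑' j : ℤ,
            (Complex.exp (-2 * Real.pi * Complex.I * m * n / N) / N) *
              (FourierTransform.fourier ⇑g ((j : ℝ) + θ₁) *
                fourier j ((((θ₂ + n) / N : ℝ)) : UnitAddCircle)) := by
          rw [Finset.mul_sum]
          refine Finset.sum_congr rfl fun n _ => ?_
          rw [step1 n, hrearr, hcoef n, ← tsum_mul_left]
      _ = ∑' j : ℤ, ∑ n ∈ Finset.range N,
            (Complex.exp (-2 * Real.pi * Complex.I * m * n / N) / N) *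
              (FourierTransform.fourier ⇑g ((j : ℝ) + θ₁) *
                fourier j ((((θ₂ + n) / N : ℝ)) : UnitAddCircle)) := (Summable.tsum_finsetSum hsumm).symm
      _ = ∑' j : ℤ, (if (N : ℤ) ∣ (j - m) then
              FourierTransform.fourier ⇑g ((j : ℝ) + θ₁) *
                Complex.exp (2 * Real.pi * Complex.I * j * θ₂ / N) else 0) := by
          refine tsum_congr fun j => ?_
          have e2 : ∀ n ∈ Finset.range N,
              (Complex.exp (-2 * Real.pi * Complex.I * m * n / N) / N) *
                (FourierTransform.fourier ⇑g ((j : ℝ) + θ₁) *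
                  fourier j ((((θ₂ + n) / N : ℝ)) : UnitAddCircle))
              = (FourierTransform.fourier ⇑g ((j : ℝ) + θ₁) *
                  Complex.exp (2 * Real.pi * Complex.I * j * θ₂ / N) / N) *
                Complex.exp (2 * Real.pi * Complex.I * ((j - m : ℤ) : ℂ) * (n : ℂ) / N) := by
            intro n _
            have hmerge : Complex.exp (-2 * Real.pi * Complex.I * m * n / N) *
                Complex.exp (2 * Real.pi * Complex.I * (j : ℂ) *
                  (((θ₂ + n) / N : ℝ) : ℂ) / (((1 : ℝ)) : ℂ))
                = Complex.exp (2 * Real.pi * Complex.I * j * θ₂ / N) *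
                  Complex.exp (2 * Real.pi * Complex.I * ((j - m : ℤ) : ℂ) * (n : ℂ) / N) := by
              rw [← Complex.exp_add, ← Complex.exp_add]
              congr 1
              push_cast
              field_simp [hNC]
              ring
            rw [fourier_coe_apply]
            linear_combination (FourierTransform.fourier ⇑g ((j : ℝ) + θ₁) / (N : ℂ)) * hmerge
          rw [Finset.sum_congr rfl e2, ← Finset.mul_sum, dc_orth_sum N hN (j - m)]
          split_ifs with hdvd
          · field_simp
          · ring
      _ = ∑' k : ℤ, Complex.exp (2 * Real.pi * Complex.I * θ₂ * m / N) *
            (Complex.exp (2 * Real.pi * Complex.I * θ₂ * k) *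
              FourierTransform.fourier ⇑g (θ₁ + m + k * N)) := by
          refine tsum_eq_tsum_of_ne_zero_bij (fun k => (m : ℤ) + k.1 * N) ?_ ?_ ?_
          · intro x y h
            have h2 := add_left_cancel h
            have hNZ : (N : ℤ) ≠ 0 := by exact_mod_cast hN.ne'
            exact Subtype.ext (mul_right_cancel₀ hNZ h2)
          · intro j hj
            simp only [Function.mem_support] at hj
            have hdvd : (N : ℤ) ∣ (j - m) := by
              by_contra hc
              exact hj (if_neg hc)
            obtain ⟨k, hk⟩ := hdvd
            have hjk : (m : ℤ) + k * N = j := by linear_combination -hk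
            refine ⟨⟨k, ?_⟩, hjk⟩
            simp only [Function.mem_support]
            rw [← key k, hjk]
            exact hj
          · exact fun x => key x.1
      _ = Complex.exp (2 * Real.pi * Complex.I * θ₂ * m / N) *
            ∑' k : ℤ, Complex.exp (2 * Real.pi * Complex.I * θ₂ * k) *
              FourierTransform.fourier ⇑g (θ₁ + m + k * N) := tsum_mul_left
  rw [hL, hR]
end
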